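/- arXiv:0707.0874 — 6 statements merged into one kernel-verified Lean document; each statement's English description precedes it below -/
import Mathlib

section
/- Let d ≥ 1, t > 0 and f ∈ L²(ℝ^d, ℂ). Then for every z ∈ ℂ^d the integral F(z) = (2πt)^{-d/2} ∫_{ℝ^d} exp(−Σ_{j=1}^d (z_j − x_j)²/(2t)) f(x) dx converges absolutely, and the function F : ℂ^d → ℂ so defined is holomorphic on ℂ^d. (This is the statement that e^{tΔ/2}f admits an entire analytic continuation from ℝ^d to ℂ^d.) -/
/-!
Expanding the square gives `Re (z_j - x_j)² ≥ x_j² / 2 - ‖z_j‖²`, so for `z` in a bounded set the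
kernel `exp (-∑ (z_j - x_j)² / (2t))` and its `z`-derivative are dominated by a multiple of the
Gaussian `exp (-‖x‖² / (8t))`. Gaussians lie in `L²`, so by Cauchy–Schwarz these dominating
functions are integrable against `f ∈ L²`, and differentiation under the integral sign shows that
the heat extension is holomorphic.
-/

open MeasureTheory Complex

/-- The time-`t` heat extension of `f : ℝ^d → ℂ` to `ℂ^d`:
`F(z) = (2πt)^{-d/2} ∫_{ℝ^d} exp(−Σ_j (z_j − x_j)²/(2t)) f(x) dx`. -/
noncomputable def heatExt (d : ℕ) (t : ℝ) (f : EuclideanSpace ℝ (Fin d) → ℂ)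
    (z : EuclideanSpace ℂ (Fin d)) : ℂ :=
  (((2 * Real.pi * t) ^ (-(d : ℝ) / 2) : ℝ) : ℂ) *
    ∫ x : EuclideanSpace ℝ (Fin d),
      Complex.exp (-∑ j : Fin d, (z j - (x j : ℂ)) ^ 2 / ((2 * t : ℝ) : ℂ)) * f x

section Gaussian

variable {V : Type*} [NormedAddCommGroup V] [InnerProductSpace ℝ V] [FiniteDimensional ℝ V]
  [MeasurableSpace V] [BorelSpace V]

lemma integrable_exp_neg_mul_sq_norm {b : ℝ} (hb : 0 < b) :
    Integrable (fun v : V => Real.exp (-b * ‖v‖ ^ 2)) := by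
  simpa [Complex.norm_exp, ← ofReal_pow] using
    (GaussianFourier.integrable_cexp_neg_mul_sq_norm_add (V := V) (b := b) (by simpa) 0 0).norm

lemma memLp_two_exp_neg_mul_sq_norm {b : ℝ} (hb : 0 < b) :
    MemLp (fun v : V => Real.exp (-b * ‖v‖ ^ 2)) 2 := by
  rw [memLp_two_iff_integrable_sq (by fun_prop)]
  refine (integrable_exp_neg_mul_sq_norm (V := V) (mul_pos two_pos hb)).congr
    (.of_forall fun v => ?_)
  dsimp only
  rw [← Real.exp_nat_mul]
  ring_nf

end Gaussian

lemma half_sq_sub_norm_sq_le_re_sub_sq (w : ℂ) (a : ℝ) :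
    a ^ 2 / 2 - ‖w‖ ^ 2 ≤ ((w - a) ^ 2).re := by
  rw [Complex.sq_norm, Complex.normSq_apply]
  simp only [pow_two, mul_re, sub_re, sub_im, ofReal_re, ofReal_im]
  nlinarith [sq_nonneg (a - 2 * w.re)]

lemma add_mul_exp_neg_sq_le {t B s : ℝ} (ht : 0 < t) (hB : 0 ≤ B) (hs : 0 ≤ s) :
    (s + B) * Real.exp (-(4 * t)⁻¹ * s ^ 2) ≤
      (B + 1) * Real.exp (2 * t) * Real.exp (-(8 * t)⁻¹ * s ^ 2) := by
  have hlin : s + B ≤ (B + 1) * Real.exp s := by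
    nlinarith [Real.add_one_le_exp s, Real.one_le_exp hs]
  have hquad : s + -(4 * t)⁻¹ * s ^ 2 ≤ 2 * t + -(8 * t)⁻¹ * s ^ 2 := by
    have : 0 ≤ (s - 4 * t) ^ 2 / (8 * t) := by positivity
    have e : (s - 4 * t) ^ 2 / (8 * t) =
        2 * t + -(8 * t)⁻¹ * s ^ 2 - (s + -(4 * t)⁻¹ * s ^ 2) := by
      field_simp
      ring
    linarith
  calc (s + B) * Real.exp (-(4 * t)⁻¹ * s ^ 2)
      ≤ (B + 1) * (Real.exp s * Real.exp (-(4 * t)⁻¹ * s ^ 2)) := by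
        rw [← mul_assoc]; gcongr
    _ ≤ (B + 1) * (Real.exp (2 * t) * Real.exp (-(8 * t)⁻¹ * s ^ 2)) := by
        rw [← Real.exp_add, ← Real.exp_add]; gcongr
    _ = _ := by ring

section EuclideanProj

variable {𝕜 ι : Type*} [RCLike 𝕜] [Fintype ι]

lemma EuclideanSpace.norm_proj_le_one (j : ι) : ‖EuclideanSpace.proj (𝕜 := 𝕜) j‖ ≤ 1 :=
  ContinuousLinearMap.opNorm_le_bound _ zero_le_one fun v => by
    simpa using PiLp.norm_apply_le v j

lemma EuclideanSpace.norm_sum_smul_proj_le (c : ι → 𝕜) :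
    ‖∑ j, c j • EuclideanSpace.proj (𝕜 := 𝕜) j‖ ≤ ∑ j, ‖c j‖ := by
  refine (norm_sum_le _ _).trans (Finset.sum_le_sum fun j _ => ?_)
  calc ‖c j • EuclideanSpace.proj (𝕜 := 𝕜) j‖
      ≤ ‖c j‖ * ‖EuclideanSpace.proj (𝕜 := 𝕜) j‖ := ContinuousLinearMap.opNorm_smul_le _ _
    _ ≤ ‖c j‖ := mul_le_of_le_one_right (norm_nonneg _) (norm_proj_le_one j)

end EuclideanProj

section HeatKernel

variable {ι : Type*} [Fintype ι]

noncomputable def heatKernel (t : ℝ) (z : EuclideanSpace ℂ ι) (x : EuclideanSpace ℝ ι) : ℂ :=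
  cexp (-∑ j, (z j - (x j : ℂ)) ^ 2 / ((2 * t : ℝ) : ℂ))

lemma norm_heatKernel_le {t : ℝ} (ht : 0 < t) (z : EuclideanSpace ℂ ι)
    (x : EuclideanSpace ℝ ι) :
    ‖heatKernel t z x‖ ≤ Real.exp (‖z‖ ^ 2 / (2 * t)) * Real.exp (-(4 * t)⁻¹ * ‖x‖ ^ 2) := by
  have hsum : ‖x‖ ^ 2 / 2 - ‖z‖ ^ 2 ≤ ∑ j, ((z j - x j) ^ 2).re := by
    rw [PiLp.norm_sq_eq_of_L2, PiLp.norm_sq_eq_of_L2, Finset.sum_div, ← Finset.sum_sub_distrib]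
    refine Finset.sum_le_sum fun j _ => ?_
    simpa using half_sq_sub_norm_sq_le_re_sub_sq (z j) (x j)
  rw [heatKernel, norm_exp, ← Real.exp_add, Real.exp_le_exp, neg_re, re_sum]
  simp only [div_ofReal_re]
  rw [← Finset.sum_div]
  calc -((∑ j, ((z j - x j) ^ 2).re) / (2 * t)) ≤ -((‖x‖ ^ 2 / 2 - ‖z‖ ^ 2) / (2 * t)) := by
        gcongr
    _ = _ := by field_simp; ring

lemma integrable_heatKernel_mul {t : ℝ} (ht : 0 < t) {f : EuclideanSpace ℝ ι → ℂ}
    (hf : MemLp f 2) (z : EuclideanSpace ℂ ι) :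
    Integrable (fun x => heatKernel t z x * f x) := by
  have hK : MemLp (heatKernel t z) 2 := by
    refine (memLp_two_exp_neg_mul_sq_norm (V := EuclideanSpace ℝ ι) (b := (4 * t)⁻¹)
      (by positivity)).of_le_mul (c := Real.exp (‖z‖ ^ 2 / (2 * t)))
      (by unfold heatKernel; fun_prop) (.of_forall fun x => ?_)
    rw [Real.norm_of_nonneg (Real.exp_pos _).le]
    exact norm_heatKernel_le ht z x
  exact hK.integrable_mul hf

noncomputable def heatKernelFDeriv (t : ℝ) (z : EuclideanSpace ℂ ι) (x : EuclideanSpace ℝ ι) :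
    EuclideanSpace ℂ ι →L[ℂ] ℂ :=
  heatKernel t z x •
    ∑ j, (((x j : ℂ) - z j) / t) • EuclideanSpace.proj (𝕜 := ℂ) j

lemma hasFDerivAt_heatKernel (t : ℝ) (z : EuclideanSpace ℂ ι) (x : EuclideanSpace ℝ ι) :
    HasFDerivAt (heatKernel t · x) (heatKernelFDeriv t z x) z := by
  have hexponent : HasFDerivAt
      (fun z : EuclideanSpace ℂ ι => -∑ j, (z j - (x j : ℂ)) ^ 2 / ((2 * t : ℝ) : ℂ))
      (∑ j, (((x j : ℂ) - z j) / t) • EuclideanSpace.proj (𝕜 := ℂ) j) z := by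
    simp_rw [div_eq_mul_inv]
    refine (HasFDerivAt.fun_sum fun j _ =>
      (((EuclideanSpace.proj (𝕜 := ℂ) j).hasFDerivAt.sub_const (x j : ℂ)).pow
        2).mul_const _).neg.congr_fderiv ?_
    ext v
    simp only [ofReal_mul, ofReal_ofNat, mul_inv_rev, PiLp.proj_apply, Nat.add_one_sub_one,
      pow_one, nsmul_eq_mul, Nat.cast_ofNat, neg_apply, sum_apply, smul_apply, smul_eq_mul]
    rw [← Finset.sum_neg_distrib]
    exact Finset.sum_congr rfl fun j _ => by ring
  exact hexponent.cexp

lemma norm_heatKernelFDeriv_le {t B : ℝ} (ht : 0 < t) (hB : 0 ≤ B) {z : EuclideanSpace ℂ ι}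
    (hz : ‖z‖ ≤ B) (x : EuclideanSpace ℝ ι) :
    ‖heatKernelFDeriv t z x‖ ≤
      Fintype.card ι / t * (B + 1) * Real.exp (2 * t) * Real.exp (B ^ 2 / (2 * t)) *
        Real.exp (-(8 * t)⁻¹ * ‖x‖ ^ 2) := by
  have hcoeff : ∀ j, ‖((x j : ℂ) - z j) / t‖ ≤ (‖x‖ + B) / t := fun j => by
    rw [norm_div, norm_real, Real.norm_of_nonneg ht.le]
    gcongr
    refine (norm_sub_le _ _).trans (add_le_add ?_ ((PiLp.norm_apply_le z j).trans hz))
    simpa using PiLp.norm_apply_le x j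
  have hlog : ‖∑ j, (((x j : ℂ) - z j) / t) • EuclideanSpace.proj (𝕜 := ℂ) j‖
      ≤ Fintype.card ι / t * (‖x‖ + B) := by
    refine (EuclideanSpace.norm_sum_smul_proj_le _).trans
      ((Finset.sum_le_sum fun j _ => hcoeff j).trans ?_)
    rw [Finset.sum_const, Finset.card_univ, nsmul_eq_mul]
    exact (by ring : _ = _).le
  have hK : ‖heatKernel t z x‖ ≤ Real.exp (B ^ 2 / (2 * t)) * Real.exp (-(4 * t)⁻¹ * ‖x‖ ^ 2) :=
    (norm_heatKernel_le ht z x).trans (by gcongr)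
  calc ‖heatKernelFDeriv t z x‖
      ≤ Real.exp (B ^ 2 / (2 * t)) * Real.exp (-(4 * t)⁻¹ * ‖x‖ ^ 2) *
          (Fintype.card ι / t * (‖x‖ + B)) :=
        (ContinuousLinearMap.opNorm_smul_le _ _).trans
          (mul_le_mul hK hlog (norm_nonneg _) (by positivity))
    _ = Fintype.card ι / t * Real.exp (B ^ 2 / (2 * t)) *
          ((‖x‖ + B) * Real.exp (-(4 * t)⁻¹ * ‖x‖ ^ 2)) := by ring
    _ ≤ Fintype.card ι / t * Real.exp (B ^ 2 / (2 * t)) *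
          ((B + 1) * Real.exp (2 * t) * Real.exp (-(8 * t)⁻¹ * ‖x‖ ^ 2)) := by
        gcongr ?_ * ?_
        exact add_mul_exp_neg_sq_le ht hB (norm_nonneg x)
    _ = _ := by ring

lemma differentiable_integral_heatKernel_mul {t : ℝ} (ht : 0 < t)
    {f : EuclideanSpace ℝ ι → ℂ} (hf : MemLp f 2) :
    Differentiable ℂ fun z => ∫ x, heatKernel t z x * f x := by
  intro z₀
  set B := ‖z₀‖ + 1
  set C := Fintype.card ι / t * (B + 1) * Real.exp (2 * t) * Real.exp (B ^ 2 / (2 * t))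
  have hball : ∀ z ∈ Metric.ball z₀ 1, ‖z‖ ≤ B := fun z hz => by
    have := norm_le_norm_add_norm_sub' z z₀
    rw [Metric.mem_ball, dist_eq_norm] at hz
    linarith
  have hbound_integrable : Integrable fun x => C * (Real.exp (-(8 * t)⁻¹ * ‖x‖ ^ 2) * ‖f x‖) :=
    ((memLp_two_exp_neg_mul_sq_norm (by positivity)).integrable_mul hf.norm).const_mul C
  refine (hasFDerivAt_integral_of_dominated_of_fderiv_le (Metric.ball_mem_nhds z₀ one_pos)
    (.of_forall fun z => (integrable_heatKernel_mul ht hf z).aestronglyMeasurable)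
    (integrable_heatKernel_mul ht hf z₀) (F' := fun z x => f x • heatKernelFDeriv t z x)
    ?_ (.of_forall fun x z hz => ?_) hbound_integrable
    (.of_forall fun x z _ => (hasFDerivAt_heatKernel t z x).mul_const (f x))).differentiableAt
  · exact hf.aestronglyMeasurable.smul (by unfold heatKernelFDeriv heatKernel; fun_prop)
  · calc ‖f x • heatKernelFDeriv t z x‖ = ‖f x‖ * ‖heatKernelFDeriv t z x‖ := norm_smul _ _
      _ ≤ ‖f x‖ * (C * Real.exp (-(8 * t)⁻¹ * ‖x‖ ^ 2)) := by
        gcongr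
        exact norm_heatKernelFDeriv_le ht (by positivity) (hball z hz) x
      _ = C * (Real.exp (-(8 * t)⁻¹ * ‖x‖ ^ 2) * ‖f x‖) := by ring

end HeatKernel

theorem heat_extension_entire_general (d : ℕ) (t : ℝ) (ht : 0 < t)
    (f : EuclideanSpace ℝ (Fin d) → ℂ)
    (hf : MemLp f 2 (volume : Measure (EuclideanSpace ℝ (Fin d)))) :
    (∀ z : EuclideanSpace ℂ (Fin d),
      Integrable (fun x : EuclideanSpace ℝ (Fin d) =>
        Complex.exp (-∑ j : Fin d, (z j - (x j : ℂ)) ^ 2 / ((2 * t : ℝ) : ℂ)) * f x) volume)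
    ∧ Differentiable ℂ (heatExt d t f) :=
  ⟨integrable_heatKernel_mul ht hf, (differentiable_integral_heatKernel_mul ht hf).const_mul _⟩

/-- For any `f ∈ L²(ℝ^d)`, the integral defining the time-`t` heat extension of `f`
converges absolutely at every `z ∈ ℂ^d`, and the resulting function is holomorphic
on all of `ℂ^d`. -/
theorem heat_extension_entire (d : ℕ) (hd : 1 ≤ d) (t : ℝ) (ht : 0 < t)
    (f : EuclideanSpace ℝ (Fin d) → ℂ)
    (hf : MemLp f 2 (volume : Measure (EuclideanSpace ℝ (Fin d)))) :
    (∀ z : EuclideanSpace ℂ (Fin d),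
      Integrable (fun x : EuclideanSpace ℝ (Fin d) =>
        Complex.exp (-∑ j : Fin d, (z j - (x j : ℂ)) ^ 2 / ((2 * t : ℝ) : ℂ)) * f x) volume)
    ∧ Differentiable ℂ (heatExt d t f) :=
  heat_extension_entire_general d t ht f hf
end

section
/- Suppose H is a real-analytic function on (0, ∞) such that for some ε > 0 and some sequence (aₙ) of non-negative real numbers, H(R) = Σ_{n=0}^∞ aₙ Rⁿ for all R ∈ (0, ε), the series converging there. Then the power series Σ_{n=0}^∞ aₙ Rⁿ has infinite radius of convergence (it converges for every R ∈ ℝ). -/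
/-!
Pringsheim's theorem. The radius `ρ` of `∑ aₙ Rⁿ` is positive since the series converges on
`(0, ε)`. If `ρ < ∞`, the identity theorem makes its sum agree with `H` on `(0, ρ)`, so at
`x = ρ - η` the sum has the Taylor series of `H`, which converges on a radius `> 2η` because `H` is
analytic at `ρ`. The re-expanded coefficients `∑ₗ C(k+l,k) a_{k+l} xˡ` are non-negative, so the
double series `∑ₖ ∑ₗ C(k+l,k) a_{k+l} xˡ tᵏ` may be resummed along `k + l = n` into
`∑ aₙ (x + t)ⁿ`, which would then converge at `x + 2η = ρ + η > ρ`.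
-/

open FormalMultilinearSeries Set Filter Topology Finset
open scoped ENNReal

theorem summable_sum_antidiagonal_of_summable {A α : Type*} [AddCommMonoid A] [HasAntidiagonal A]
    [AddCommMonoid α] [TopologicalSpace α] [ContinuousAdd α] [T3Space α] {f : A × A → α}
    (hf : Summable f) : Summable fun n ↦ ∑ kl ∈ antidiagonal n, f kl := by
  rw [← HasAntidiagonal.sigmaAntidiagonalEquivProd.summable_iff] at hf
  conv => congr; ext; rw [← Finset.sum_finset_coe, ← tsum_fintype (L := .unconditional _)]
  exact hf.sigma' fun n ↦ (hasSum_fintype _).summable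

section OfScalars

variable {𝕜 : Type*} [NontriviallyNormedField 𝕜] {a : ℕ → 𝕜}

theorem le_radius_ofScalars_of_summable {x : 𝕜} (h : Summable fun n ↦ a n * x ^ n) :
    (‖x‖₊ : ℝ≥0∞) ≤ (ofScalars 𝕜 a).radius := by
  refine (ofScalars 𝕜 a).le_radius_of_tendsto (l := 0) ?_
  simpa [ofScalars_norm, norm_mul, norm_pow] using h.tendsto_atTop_zero.norm

theorem summable_mul_pow_of_lt_radius_ofScalars [CompleteSpace 𝕜] {x : 𝕜}
    (h : (‖x‖₊ : ℝ≥0∞) < (ofScalars 𝕜 a).radius) : Summable fun n ↦ a n * x ^ n := by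
  simpa [ofScalars_apply_eq, mul_comm] using (ofScalars 𝕜 a).summable (mem_eball_zero_iff.2 h)

theorem hasSum_ofScalars_changeOrigin_apply_one [CompleteSpace 𝕜] {x : 𝕜}
    (hx : (‖x‖₊ : ℝ≥0∞) < (ofScalars 𝕜 a).radius) (k : ℕ) :
    HasSum (fun l ↦ ((k + l).choose k : 𝕜) * a (k + l) * x ^ l)
      ((ofScalars 𝕜 a).changeOrigin x k fun _ ↦ 1) := by
  set p := ofScalars 𝕜 a
  have h := ((p.hasFPowerSeriesOnBall_changeOrigin k (pos_of_gt hx)).hasSum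
    (mem_eball_zero_iff.2 hx)).mapL (ContinuousMultilinearMap.apply 𝕜 _ 𝕜 fun _ ↦ 1)
  rw [zero_add] at h
  refine h.congr_fun fun l ↦ ?_
  have hterm (s : Finset (Fin (k + l))) (hs : s.card = l) :
      p.changeOriginSeriesTerm k l s hs (fun _ ↦ x) (fun _ ↦ 1) = a (k + l) * x ^ l := by
    simp [p.changeOriginSeriesTerm_apply, p, ofScalars, List.prod_ofFn, Finset.prod_piecewise, hs]
  simp only [changeOriginSeries, ContinuousMultilinearMap.apply_apply, _root_.sum_apply, hterm,
    sum_const, card_univ, Fintype.card_finset_len, Fintype.card_fin, nsmul_eq_mul, mul_assoc]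
  rw [Nat.choose_symm_add]

end OfScalars

theorem summable_mul_add_pow_of_lt_radius_changeOrigin {a : ℕ → ℝ} (ha : ∀ n, 0 ≤ a n)
    {x t : ℝ} (hx : 0 ≤ x) (ht : 0 ≤ t) (hxr : (‖x‖₊ : ℝ≥0∞) < (ofScalars ℝ a).radius)
    (htr : (‖t‖₊ : ℝ≥0∞) < ((ofScalars ℝ a).changeOrigin x).radius) :
    Summable fun n ↦ a n * (x + t) ^ n := by
  set p := ofScalars ℝ a
  set F : ℕ × ℕ → ℝ := fun kl ↦ (kl.1 + kl.2).choose kl.1 * a (kl.1 + kl.2) * x ^ kl.2 * t ^ kl.1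
  have hF : 0 ≤ F := fun kl ↦ by positivity [ha (kl.1 + kl.2)]
  have hrow (k : ℕ) : HasSum (fun l ↦ F (k, l)) (p.changeOrigin x k (fun _ ↦ 1) * t ^ k) :=
    (hasSum_ofScalars_changeOrigin_apply_one hxr k).mul_right _
  have hrow_le (k : ℕ) : p.changeOrigin x k (fun _ ↦ 1) * t ^ k ≤ ‖p.changeOrigin x k‖ * t ^ k := by
    gcongr
    calc p.changeOrigin x k (fun _ ↦ 1) ≤ ‖p.changeOrigin x k (fun _ ↦ 1)‖ := Real.le_norm_self _
      _ ≤ ‖p.changeOrigin x k‖ := ((p.changeOrigin x k).le_opNorm _).trans_eq (by simp)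
  have hsum : Summable F := by
    refine (summable_prod_of_nonneg hF).2 ⟨fun k ↦ (hrow k).summable, ?_⟩
    refine .of_nonneg_of_le (fun k ↦ tsum_nonneg fun l ↦ hF _) (fun k ↦ ?_)
      (by simpa only [coe_nnnorm, Real.norm_of_nonneg ht] using
        (p.changeOrigin x).summable_norm_mul_pow htr)
    exact (hrow k).tsum_eq ▸ hrow_le k
  refine (summable_sum_antidiagonal_of_summable hsum).congr fun n ↦ ?_
  rw [add_comm x, (Commute.all t x).add_pow', mul_sum]
  refine sum_congr rfl fun kl hkl ↦ ?_
  rw [HasAntidiagonal.mem_antidiagonal] at hkl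
  simp only [F, hkl, nsmul_eq_mul]
  ring

theorem not_analyticAt_of_eventuallyEq_ofScalars_sum {a : ℕ → ℝ} (ha : ∀ n, 0 ≤ a n) {r : ℝ}
    (hr : 0 < r) (hrad : (ofScalars ℝ a).radius = ENNReal.ofReal r) {g : ℝ → ℝ}
    (hfg : (ofScalars ℝ a).sum =ᶠ[𝓝[<] r] g) : ¬ AnalyticAt ℝ g r := by
  rintro ⟨q, R, hq⟩
  set p := ofScalars ℝ a
  obtain ⟨l, ⟨hl0, hlr⟩, hl⟩ := (mem_nhdsLT_iff_exists_mem_Ico_Ioo_subset hr).1 hfg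
  obtain ⟨δ, -, hδ, hδR⟩ := ENNReal.lt_iff_exists_real_btwn.1 hq.r_pos
  -- `3η ≤ δ < R`: the expansion of `g` around `r - η` then still converges at distance `2η`.
  set η := min (δ / 3) ((r - l) / 2)
  have hη0 : 0 < η := lt_min (by simpa using hδ) (by linarith)
  have hηδ : 3 * η ≤ δ := by linarith [min_le_left (δ / 3) ((r - l) / 2)]
  have hηr : η < r - l := by linarith [min_le_right (δ / 3) ((r - l) / 2)]
  have hnorm (y : ℝ) (hy : 0 ≤ y) : (‖y‖₊ : ℝ≥0∞) = ENNReal.ofReal y := by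
    rw [← enorm_eq_nnnorm, Real.enorm_eq_ofReal hy]
  set x := r - η
  have hx : 0 ≤ x := by linarith
  have hxr : (‖x‖₊ : ℝ≥0∞) < p.radius := by
    rw [hnorm x hx, hrad]
    exact ENNReal.ofReal_lt_ofReal_iff hr |>.2 (by linarith)
  have h3ηR : ENNReal.ofReal (2 * η) + ‖-η‖₊ < R := by
    rw [nnnorm_neg, hnorm η hη0.le, ← ENNReal.ofReal_add (by positivity) hη0.le]
    exact (ENNReal.ofReal_le_ofReal (by linarith)).trans_lt hδR
  have hηR : (‖-η‖₊ : ℝ≥0∞) < R := le_add_self.trans_lt h3ηR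
  have hpx := (p.hasFPowerSeriesOnBall (pos_of_gt hxr)).changeOrigin hxr
  have hqx := hq.changeOrigin hηR
  rw [zero_add] at hpx
  rw [← sub_eq_add_neg] at hqx
  have hfg_x : p.sum =ᶠ[𝓝 x] g :=
    mem_of_superset (Ioo_mem_nhds (by linarith) (by linarith)) hl
  have hcoeff : p.changeOrigin x = q.changeOrigin (-η) :=
    (hpx.hasFPowerSeriesAt.congr hfg_x).eq_formalMultilinearSeries hqx.hasFPowerSeriesAt
  have htr : (‖2 * η‖₊ : ℝ≥0∞) < (p.changeOrigin x).radius := by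
    rw [hcoeff]
    refine lt_of_lt_of_le ?_ hqx.r_le
    rw [hnorm _ (by positivity)]
    exact lt_tsub_iff_right.2 h3ηR
  have hsum := summable_mul_add_pow_of_lt_radius_changeOrigin ha hx (by positivity) hxr htr
  have := (le_radius_ofScalars_of_summable hsum).trans_eq hrad
  rw [hnorm _ (by positivity), ENNReal.ofReal_le_ofReal_iff hr.le] at this
  linarith

theorem eqOn_ofScalars_sum_of_hasSum {a : ℕ → ℝ} {H : ℝ → ℝ} {ε r : ℝ} (hε : 0 < ε) (hr : 0 < r)
    (hrad : ENNReal.ofReal r ≤ (ofScalars ℝ a).radius) (hH : AnalyticOnNhd ℝ H (Ioo 0 r))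
    (hser : ∀ x ∈ Ioo 0 ε, HasSum (fun n ↦ a n * x ^ n) (H x)) :
    EqOn (ofScalars ℝ a).sum H (Ioo 0 r) := by
  have hp : AnalyticOnNhd ℝ (ofScalars ℝ a).sum (Ioo 0 r) :=
    (ofScalars ℝ a).analyticOnNhd.mono fun x hx ↦ by
      rw [mem_eball_zero_iff, Real.enorm_eq_ofReal hx.1.le]
      exact (ENNReal.ofReal_lt_ofReal_iff hr |>.2 hx.2).trans_le hrad
  have hz : min ε r / 2 < min ε r := half_lt_self (lt_min hε hr)
  refine hp.eqOn_of_preconnected_of_eventuallyEq hH isPreconnected_Ioo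
    ⟨by positivity, hz.trans_le (min_le_right _ _)⟩
    (mem_of_superset (Ioo_mem_nhds (by positivity) hz) fun x hx ↦ ?_)
  exact (ofScalars_sum_eq a x).trans (hser x ⟨hx.1, hx.2.trans_le (min_le_left _ _)⟩).tsum_eq

/-- If `H` is real-analytic on `(0, ∞)` and on `(0, ε)` is given by a convergent power
series `Σ aₙ Rⁿ` with non-negative coefficients, then that power series has infinite
radius of convergence, i.e. it converges for every real `R`. -/
theorem powerSeries_nonneg_coeff_entire (H : ℝ → ℝ)
    (hH : AnalyticOnNhd ℝ H (Set.Ioi 0))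
    (a : ℕ → ℝ) (ha : ∀ n, 0 ≤ a n)
    (ε : ℝ) (hε : 0 < ε)
    (hser : ∀ R ∈ Set.Ioo (0 : ℝ) ε, HasSum (fun n => a n * R ^ n) (H R)) :
    ∀ R : ℝ, Summable (fun n => a n * R ^ n) := by
  set p := ofScalars ℝ a
  have hpos : 0 < p.radius :=
    (le_radius_ofScalars_of_summable (hser (ε / 2) ⟨by positivity, by linarith⟩).summable).trans_lt'
      (by simp [hε.ne'])
  have hrad : p.radius = ⊤ := by
    by_contra hfin
    have hr : 0 < p.radius.toReal := ENNReal.toReal_pos hpos.ne' hfin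
    have hrad : p.radius = ENNReal.ofReal p.radius.toReal := (ENNReal.ofReal_toReal hfin).symm
    have hsum_eq := eqOn_ofScalars_sum_of_hasSum hε hr hrad.ge (hH.mono fun x hx ↦ hx.1) hser
    exact not_analyticAt_of_eventuallyEq_ofScalars_sum ha hr hrad
      (eventuallyEq_of_mem (Ioo_mem_nhdsLT hr) hsum_eq) (hH _ hr)
  exact fun R ↦ summable_mul_pow_of_lt_radius_ofScalars (hrad ▸ ENNReal.coe_lt_top)
end

section
/- Let d ≥ 1 and let g : ℝ^d → ℂ be real-analytic on all of ℝ^d. Then the function R ↦ ∫_{|y| ≤ R} g(y) dy (integration over the closed Euclidean ball of radius R with respect to Lebesgue measure) is real-analytic on (0, ∞). -/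
/-!
Substituting `y = R • x` gives `∫_{‖y‖ ≤ R} g = R ^ d • ∫_{‖x‖ ≤ 1} g (R • x) dx` for `R > 0`, so it
suffices that `Φ R = ∫_{‖x‖ ≤ 1} g (R • x) dx` is analytic at every `R₀`. For each `x`, expanding
`g` around `R₀ • x` gives `g ((R₀ + t) • x) = ∑ tⁿ • cₙ(x)`. On the compact set `R₀ • B̄(0, 1)`
these expansions have a common radius `r` and `‖cₙ(x)‖ ≤ C / rⁿ`, which lets one integrate the
series term by term for `|t| < r`.
-/

open MeasureTheory Metric Filter Topology

open scoped ENNReal NNReal Nat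

section UniformExpansion

variable {𝕜 E F : Type*} [NontriviallyNormedField 𝕜] [NormedAddCommGroup E] [NormedSpace 𝕜 E]
  [NormedAddCommGroup F] [NormedSpace 𝕜 F]

theorem HasFPowerSeriesOnBall.hasSum_smul {g : E → F} {p : FormalMultilinearSeries 𝕜 E F}
    {x v : E} {r : ℝ≥0∞} (hp : HasFPowerSeriesOnBall g p x r) {t : 𝕜}
    (ht : t • v ∈ eball (0 : E) r) :
    HasSum (fun n => t ^ n • p n fun _ => v) (g (x + t • v)) := by
  convert hp.hasSum ht using 2 with n
  simpa [Finset.prod_const] using ((p n).map_smul_univ (fun _ => t) fun _ => v).symm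

theorem FormalMultilinearSeries.nnnorm_changeOrigin_mul_pow_le
    (p : FormalMultilinearSeries 𝕜 E F) {x : E} {s : ℝ≥0} (hx : ‖x‖₊ ≤ s)
    (hs : (s + s : ℝ≥0∞) < p.radius) (n : ℕ) :
    ‖p.changeOrigin x n‖₊ * s ^ n ≤
      ∑' σ : Σ k l : ℕ, { u : Finset (Fin (k + l)) // u.card = l },
        ‖p (σ.1 + σ.2.1)‖₊ * s ^ σ.2.1 * s ^ σ.1 := by
  have hsum := p.changeOriginSeries_summable_aux₁ hs
  have hfiber := p.changeOriginSeries_summable_aux₂ ((le_add_self).trans_lt hs) n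
  calc ‖p.changeOrigin x n‖₊ * s ^ n
      ≤ (∑' σ : Σ l : ℕ, { u : Finset (Fin (n + l)) // u.card = l },
          ‖p (n + σ.1)‖₊ * ‖x‖₊ ^ σ.1) * s ^ n := by
        gcongr
        exact p.nnnorm_changeOrigin_le n ((ENNReal.coe_le_coe.2 hx).trans_lt
          ((le_add_self).trans_lt hs))
    _ ≤ (∑' σ : Σ l : ℕ, { u : Finset (Fin (n + l)) // u.card = l },
          ‖p (n + σ.1)‖₊ * s ^ σ.1) * s ^ n := by
        gcongr
        exact NNReal.summable_of_le (fun σ => by gcongr) hfiber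
    _ = ∑' σ : Σ l : ℕ, { u : Finset (Fin (n + l)) // u.card = l },
          ‖p (n + σ.1)‖₊ * s ^ σ.1 * s ^ n := (NNReal.tsum_mul_right _ _).symm
    _ ≤ _ := NNReal.tsum_comp_le_tsum_of_inj (i := Sigma.mk n) hsum sigma_mk_injective

variable (𝕜) in
def HasUniformFPowerSeriesOn (g : E → F) (S : Set E) (r C : ℝ≥0) : Prop :=
  ∀ x ∈ S, ∃ p : FormalMultilinearSeries 𝕜 E F,
    HasFPowerSeriesOnBall g p x r ∧ ∀ n, ‖p n‖₊ * r ^ n ≤ C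

namespace HasUniformFPowerSeriesOn

variable {g : E → F} {S T : Set E} {r r' C C' : ℝ≥0}

theorem mono (h : HasUniformFPowerSeriesOn 𝕜 g S r C) (hT : T ⊆ S) (hr' : 0 < r')
    (hr : r' ≤ r) (hC : C ≤ C') : HasUniformFPowerSeriesOn 𝕜 g T r' C' := by
  intro x hx
  obtain ⟨p, hp, hpC⟩ := h x (hT hx)
  refine ⟨p, hp.mono (by exact_mod_cast hr') (by exact_mod_cast hr), fun n => ?_⟩
  calc ‖p n‖₊ * r' ^ n ≤ ‖p n‖₊ * r ^ n := by gcongr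
    _ ≤ C' := (hpC n).trans hC

theorem union (hS : HasUniformFPowerSeriesOn 𝕜 g S r C)
    (hT : HasUniformFPowerSeriesOn 𝕜 g T r' C') (hr : 0 < r) (hr' : 0 < r') :
    HasUniformFPowerSeriesOn 𝕜 g (S ∪ T) (min r r') (max C C') := by
  rintro x (hx | hx)
  · exact hS.mono subset_rfl (lt_min hr hr') (min_le_left _ _) (le_max_left _ _) x hx
  · exact hT.mono subset_rfl (lt_min hr hr') (min_le_right _ _) (le_max_right _ _) x hx

end HasUniformFPowerSeriesOn

/-- Re-expanding around nearby points `x` controls both the radius and the coefficients, since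
all the series `p.changeOrigin (x - x₀)` are dominated by one convergent double series. -/
theorem HasFPowerSeriesOnBall.exists_hasUniformFPowerSeriesOn_ball [CompleteSpace F]
    {g : E → F} {p : FormalMultilinearSeries 𝕜 E F} {x₀ : E} {ρ : ℝ≥0∞}
    (hg : HasFPowerSeriesOnBall g p x₀ ρ) :
    ∃ s : ℝ≥0, 0 < s ∧ ∃ C, HasUniformFPowerSeriesOn 𝕜 g (ball x₀ s) s C := by
  obtain ⟨s, hs0, hsρ⟩ := ENNReal.lt_iff_exists_nnreal_btwn.1 (ENNReal.half_pos hg.r_pos.ne')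
  have hss : (s + s : ℝ≥0∞) < ρ := (ENNReal.add_halves ρ) ▸ ENNReal.add_lt_add hsρ hsρ
  refine ⟨s, by exact_mod_cast hs0, _, fun x hx => ⟨p.changeOrigin (x - x₀), ?_, fun n =>
    p.nnnorm_changeOrigin_mul_pow_le ?_ (hss.trans_le hg.r_le) n⟩⟩
  · have hxs : (‖x - x₀‖₊ : ℝ≥0∞) < s := by
      rw [mem_ball_iff_norm] at hx
      exact_mod_cast hx
    have hx' := hg.changeOrigin (hxs.trans (le_self_add.trans_lt hss))
    rw [add_sub_cancel] at hx'
    refine hx'.mono (by exact_mod_cast hs0) (ENNReal.le_sub_of_add_le_right ENNReal.coe_ne_top ?_)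
    exact (add_le_add_right hxs.le _).trans hss.le
  · rw [mem_ball_iff_norm] at hx
    exact_mod_cast hx.le

theorem IsCompact.exists_hasUniformFPowerSeriesOn [CompleteSpace F] {g : E → F} {K : Set E}
    (hK : IsCompact K) (hg : AnalyticOnNhd 𝕜 g K) :
    ∃ r : ℝ≥0, 0 < r ∧ ∃ C, HasUniformFPowerSeriesOn 𝕜 g K r C := by
  refine hK.induction_on ⟨1, one_pos, 0, fun x hx => hx.elim⟩ ?_ ?_ ?_
  · rintro S T hST ⟨r, hr, C, hT⟩
    exact ⟨r, hr, C, hT.mono hST hr le_rfl le_rfl⟩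
  · rintro S T ⟨r, hr, C, hS⟩ ⟨r', hr', C', hT⟩
    exact ⟨min r r', lt_min hr hr', _, hS.union hT hr hr'⟩
  · intro x hx
    obtain ⟨p, ρ, hp⟩ := hg x hx
    obtain ⟨s, hs, C, hball⟩ := hp.exists_hasUniformFPowerSeriesOn_ball
    exact ⟨ball x s, mem_nhdsWithin_of_mem_nhds (ball_mem_nhds x (by exact_mod_cast hs)),
      s, hs, C, hball⟩

end UniformExpansion

theorem hasFPowerSeriesOnBall_integral_of_hasSum {𝕜 α E : Type*} [NontriviallyNormedField 𝕜]
    [MeasurableSpace α] {μ : Measure α} [IsFiniteMeasure μ]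
    [NormedAddCommGroup E] [NormedSpace ℝ E] [NormedSpace 𝕜 E] [SMulCommClass ℝ 𝕜 E]
    {f : 𝕜 → α → E} {c : ℕ → α → E} {x₀ : 𝕜} {r C : ℝ≥0} (hr : 0 < r)
    (hc : ∀ n, Integrable (c n) μ) (hcC : ∀ n, ∀ᵐ y ∂μ, ‖c n y‖ ≤ C / r ^ n)
    (hf : ∀ t : 𝕜, ‖t‖ < r → ∀ᵐ y ∂μ, HasSum (fun n => t ^ n • c n y) (f (x₀ + t) y)) :
    HasFPowerSeriesOnBall (fun x => ∫ y, f x y ∂μ)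
      (fun n => ContinuousMultilinearMap.mkPiRing 𝕜 (Fin n) (∫ y, c n y ∂μ)) x₀ r := by
  have hr' : (0 : ℝ) < r := hr
  have hint_le (n : ℕ) : ‖∫ y, c n y ∂μ‖ ≤ C / r ^ n * μ.real Set.univ :=
    norm_integral_le_of_norm_le_const (hcC n)
  refine ⟨?_, by exact_mod_cast hr, fun {t} ht => ?_⟩
  · refine FormalMultilinearSeries.le_radius_of_bound _ (C * μ.real Set.univ) fun n => ?_
    rw [ContinuousMultilinearMap.norm_mkPiRing]
    calc ‖∫ y, c n y ∂μ‖ * r ^ n ≤ C / r ^ n * μ.real Set.univ * r ^ n := by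
          gcongr
          exact hint_le n
      _ = C * μ.real Set.univ := by field_simp
  · have htr : ‖t‖ < r := by simpa using ht
    have hterm_le (n : ℕ) :
        ∫ y, ‖t ^ n • c n y‖ ∂μ ≤ C * μ.real Set.univ * (‖t‖ / r) ^ n :=
      calc ∫ y, ‖t ^ n • c n y‖ ∂μ ≤ ‖∫ y, ‖t ^ n • c n y‖ ∂μ‖ := le_abs_self _
        _ ≤ ‖t‖ ^ n * (C / r ^ n) * μ.real Set.univ :=
          norm_integral_le_of_norm_le_const <| (hcC n).mono fun y hy => by
            rw [norm_norm, norm_smul, norm_pow]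
            gcongr
        _ = C * μ.real Set.univ * (‖t‖ / r) ^ n := by ring
    have hsum := hasSum_integral_of_summable_integral_norm (fun n => (hc n).smul (t ^ n))
      (Summable.of_nonneg_of_le (fun n => integral_nonneg fun y => norm_nonneg _) hterm_le
        ((summable_geometric_of_lt_one (by positivity)
          ((div_lt_one hr').2 htr)).mul_left _))
    simp only [Pi.smul_apply] at hsum
    rw [integral_congr_ae ((hf t htr).mono fun y hy => hy.tsum_eq)] at hsum
    simpa [integral_smul] using hsum

theorem AnalyticOnNhd.analyticAt_setIntegral_closedBall_comp_smul {E F : Type*}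
    [NormedAddCommGroup E] [NormedSpace ℝ E] [ProperSpace E] [MeasurableSpace E] [BorelSpace E]
    [NormedAddCommGroup F] [NormedSpace ℝ F] [CompleteSpace F]
    (μ : Measure E) [IsFiniteMeasureOnCompacts μ] {g : E → F} (hg : AnalyticOnNhd ℝ g Set.univ)
    (R₀ : ℝ) : AnalyticAt ℝ (fun R : ℝ => ∫ y in closedBall (0 : E) 1, g (R • y) ∂μ) R₀ := by
  have hB : IsCompact (closedBall (0 : E) 1) := isCompact_closedBall 0 1
  have : IsFiniteMeasure (μ.restrict (closedBall (0 : E) 1)) :=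
    isFiniteMeasure_restrict.2 hB.measure_lt_top.ne
  obtain ⟨r, hr, C, hgK⟩ := (hB.image (continuous_const_smul R₀)).exists_hasUniformFPowerSeriesOn
    (hg.mono (Set.subset_univ _))
  -- Coefficients taken from `iteratedFDeriv` rather than from the series chosen at each point,
  -- so that they are continuous in `y`.
  set c : ℕ → E → F := fun n y => (n ! : ℝ)⁻¹ • iteratedFDeriv ℝ n g (R₀ • y) fun _ => y
  have hc (n : ℕ) : Continuous (c n) := by
    have := (hg.iteratedFDeriv n).continuousOn.comp_continuous (continuous_const_smul R₀)
      fun y => Set.mem_univ _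
    fun_prop
  have hexp : ∀ y ∈ closedBall (0 : E) 1, ∃ p : FormalMultilinearSeries ℝ E F,
      HasFPowerSeriesOnBall g p (R₀ • y) r ∧ (∀ n, ‖p n‖₊ * r ^ n ≤ C) ∧
        ∀ n, c n y = p n fun _ => y := by
    intro y hy
    obtain ⟨p, hp, hpC⟩ := hgK _ (Set.mem_image_of_mem _ hy)
    refine ⟨p, hp, hpC, fun n => ?_⟩
    simp only [c]
    rw [← hp.factorial_smul, ← Nat.cast_smul_eq_nsmul ℝ, inv_smul_smul₀ (by positivity)]
  refine (hasFPowerSeriesOnBall_integral_of_hasSum hr (f := fun R y => g (R • y)) (c := c)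
    (C := C) (fun n => (hc n).continuousOn.integrableOn_compact hB) (fun n => ?_)
    fun t ht => ?_).analyticAt
  · refine ae_restrict_of_forall_mem measurableSet_closedBall fun y hy => ?_
    obtain ⟨p, -, hpC, hcp⟩ := hexp y hy
    have hpC' : ‖p n‖ * r ^ n ≤ C := by exact_mod_cast hpC n
    calc ‖c n y‖ = ‖p n fun _ => y‖ := by rw [hcp]
      _ ≤ ‖p n‖ * 1 ^ n :=
        (p n).le_opNorm_mul_pow_of_le ((pi_norm_const_le y).trans (mem_closedBall_zero_iff.1 hy))
      _ ≤ C / r ^ n := by rwa [one_pow, mul_one, le_div_iff₀ (by positivity)]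
  · refine ae_restrict_of_forall_mem measurableSet_closedBall fun y hy => ?_
    obtain ⟨p, hp, -, hcp⟩ := hexp y hy
    have hty : ‖t • y‖ < r := by
      rw [norm_smul]
      exact (mul_le_of_le_one_right (norm_nonneg _) (mem_closedBall_zero_iff.1 hy)).trans_lt ht
    simpa only [hcp, add_smul] using hp.hasSum_smul (mem_eball_zero_iff.2 (by exact_mod_cast hty))

theorem MeasureTheory.Measure.setIntegral_closedBall_zero_eq_pow_smul {E F : Type*}
    [NormedAddCommGroup E] [NormedSpace ℝ E] [MeasurableSpace E] [BorelSpace E]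
    [FiniteDimensional ℝ E] (μ : Measure E) [μ.IsAddHaarMeasure]
    [NormedAddCommGroup F] [NormedSpace ℝ F] (f : E → F) {R : ℝ} (hR : 0 < R) :
    ∫ x in closedBall (0 : E) R, f x ∂μ =
      R ^ Module.finrank ℝ E • ∫ x in closedBall (0 : E) 1, f (R • x) ∂μ := by
  rw [μ.setIntegral_comp_smul_of_pos f _ hR, smul_unitClosedBall_of_nonneg hR.le,
    smul_inv_smul₀ (pow_ne_zero _ hR.ne')]

theorem integral_over_ball_analytic_general (d : ℕ)
    (g : EuclideanSpace ℝ (Fin d) → ℂ)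
    (hg : AnalyticOnNhd ℝ g Set.univ) :
    AnalyticOnNhd ℝ
      (fun R : ℝ => ∫ y in closedBall (0 : EuclideanSpace ℝ (Fin d)) R, g y)
      (Set.Ioi 0) := by
  intro R hR
  have hscale : (fun R : ℝ => R ^ d • ∫ y in closedBall (0 : EuclideanSpace ℝ (Fin d)) 1,
      g (R • y)) =ᶠ[𝓝 R] fun R => ∫ y in closedBall 0 R, g y := by
    filter_upwards [Ioi_mem_nhds hR] with R' hR'
    rw [volume.setIntegral_closedBall_zero_eq_pow_smul g hR', finrank_euclideanSpace_fin]
  exact ((analyticAt_id.pow d).smul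
    (hg.analyticAt_setIntegral_closedBall_comp_smul volume R)).congr hscale

/-- If `g : ℝ^d → ℂ` is real-analytic on all of `ℝ^d`, then
`R ↦ ∫_{|y| ≤ R} g(y) dy` is real-analytic on `(0, ∞)`. -/
theorem integral_over_ball_analytic (d : ℕ) (hd : 1 ≤ d)
    (g : EuclideanSpace ℝ (Fin d) → ℂ)
    (hg : AnalyticOnNhd ℝ g Set.univ) :
    AnalyticOnNhd ℝ
      (fun R : ℝ => ∫ y in closedBall (0 : EuclideanSpace ℝ (Fin d)) R, g y)
      (Set.Ioi 0) :=
  integral_over_ball_analytic_general d g hg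
end

section
/- Let d ≥ 1, r₀ > 0, σ ∈ ℝ. Suppose φ : [0, r₀) → ℂ is continuous on [0, r₀), twice continuously differentiable on (0, r₀), satisfies φ''(r) + ((d−1)/r) φ'(r) = σ φ(r) for all 0 < r < r₀, and satisfies φ(0) = 0 and lim_{r → 0⁺} φ'(r) = 0. Then φ is identically zero on [0, r₀). -/
/-!
Writing `c = (d - 1)/r ≥ 0`, the equation is `φ'' = σ φ - c φ'`: an oscillator with nonnegative
friction, singular only in the size of the friction. The energy `E = ‖φ‖² + ‖φ'‖²` satisfies
`E' = 2(1 + σ)⟪φ, φ'⟫ - 2c‖φ'‖² ≤ (1 + |σ|) E`, the friction term having the good sign, so by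
Grönwall `E r ≤ E ε · exp ((1 + |σ|)(r - ε))` for `0 < ε < r`. The initial conditions give
`E ε → 0` as `ε → 0⁺`, hence `E ≡ 0`.
-/

open Set Filter Topology Real

theorem nonpos_of_deriv_le_mul_of_tendsto_zero {f f' : ℝ → ℝ} {K a b : ℝ}
    (hf : ∀ x ∈ Ioo a b, HasDerivAt f (f' x) x) (bound : ∀ x ∈ Ioo a b, f' x ≤ K * f x)
    (hlim : Tendsto f (𝓝[>] a) (𝓝 0)) : ∀ x ∈ Ioo a b, f x ≤ 0 := by
  intro x hx
  have gronwall : ∀ t ∈ Ioo a x, f x ≤ f t * exp (K * (x - t)) := by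
    intro t ht
    have hsub : Icc t x ⊆ Ioo a b := Icc_subset_Ioo ht.1 hx.2
    have := le_gronwallBound_of_liminf_deriv_right_le (f' := f') (ε := 0) (b := x)
      (fun y hy => (hf y (hsub hy)).continuousAt.continuousWithinAt)
      (fun y hy _ hr =>
        (hf y (hsub (Ico_subset_Icc_self hy))).hasDerivWithinAt.liminf_right_slope_le hr)
      le_rfl (fun y hy => by simpa using bound y (hsub (Ico_subset_Icc_self hy)))
      x (right_mem_Icc.2 ht.2.le)
    rwa [gronwallBound_ε0] at this
  have hlim' : Tendsto (fun t => f t * exp (K * (x - t))) (𝓝[>] a) (𝓝 (0 * exp (K * (x - a)))) :=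
    hlim.mul ((continuous_const.mul (continuous_const.sub continuous_id)).rexp.tendsto a
      |>.mono_left nhdsWithin_le_nhds)
  rw [zero_mul] at hlim'
  exact ge_of_tendsto hlim' (eventually_of_mem (Ioo_mem_nhdsGT hx.1) gronwall)

theorem inner_add_inner_le_of_eq_smul_sub_smul {F : Type*} [NormedAddCommGroup F]
    [InnerProductSpace ℝ F] {u v w : F} {σ c : ℝ} (hc : 0 ≤ c) (hw : w = σ • u - c • v) :
    2 * inner ℝ u v + 2 * inner ℝ v w ≤ (1 + |σ|) * (‖u‖ ^ 2 + ‖v‖ ^ 2) := by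
  subst hw
  rw [inner_sub_right, real_inner_smul_right, real_inner_smul_right, real_inner_self_eq_norm_sq,
    real_inner_comm u v]
  have hσ : |1 + σ| ≤ 1 + |σ| := (abs_add_le _ _).trans (by rw [abs_one])
  calc 2 * inner ℝ u v + 2 * (σ * inner ℝ u v - c * ‖v‖ ^ 2)
      ≤ 2 * ((1 + σ) * inner ℝ u v) := by nlinarith [mul_nonneg hc (sq_nonneg ‖v‖)]
    _ ≤ 2 * (|1 + σ| * |inner ℝ u v|) := by rw [← abs_mul]; gcongr; exact le_abs_self _
    _ ≤ (1 + |σ|) * (2 * ‖u‖ * ‖v‖) := by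
        nlinarith [abs_real_inner_le_norm u v, abs_nonneg (inner ℝ u v), abs_nonneg (1 + σ)]
    _ ≤ (1 + |σ|) * (‖u‖ ^ 2 + ‖v‖ ^ 2) := by gcongr; exact two_mul_le_add_sq _ _

theorem eq_zero_of_deriv_deriv_eq_smul_sub_smul {F : Type*} [NormedAddCommGroup F]
    [InnerProductSpace ℝ F] {φ : ℝ → F} {c : ℝ → ℝ} {σ a b : ℝ}
    (hφ : ContDiffOn ℝ 2 φ (Ioo a b)) (hc : ∀ r ∈ Ioo a b, 0 ≤ c r)
    (hode : ∀ r ∈ Ioo a b, deriv (deriv φ) r = σ • φ r - c r • deriv φ r)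
    (hφa : Tendsto φ (𝓝[>] a) (𝓝 0)) (hφa' : Tendsto (deriv φ) (𝓝[>] a) (𝓝 0)) :
    ∀ r ∈ Ioo a b, φ r = 0 := by
  have hφ' : ContDiffOn ℝ 1 (deriv φ) (Ioo a b) := hφ.deriv_of_isOpen isOpen_Ioo (by norm_num)
  have hasDerivAt_of_contDiffOn {g : ℝ → F} {n : WithTop ℕ∞} (hg : ContDiffOn ℝ n g (Ioo a b))
      (hn : n ≠ 0) {r : ℝ} (hr : r ∈ Ioo a b) : HasDerivAt g (deriv g r) r :=
    ((hg.differentiableOn hn r hr).differentiableAt (isOpen_Ioo.mem_nhds hr)).hasDerivAt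
  have henergy := nonpos_of_deriv_le_mul_of_tendsto_zero (K := 1 + |σ|)
    (f := fun r => ‖φ r‖ ^ 2 + ‖deriv φ r‖ ^ 2)
    (fun r hr => ((hasDerivAt_of_contDiffOn hφ two_ne_zero hr).norm_sq).add
      (hasDerivAt_of_contDiffOn hφ' one_ne_zero hr).norm_sq)
    (fun r hr => by simpa only [mul_add] using
      inner_add_inner_le_of_eq_smul_sub_smul (hc r hr) (hode r hr))
    (by simpa using (hφa.norm.pow 2).add (hφa'.norm.pow 2))
  intro r hr
  have hφr : ‖φ r‖ ^ 2 = 0 := by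
    linarith [henergy r hr, sq_nonneg ‖φ r‖, sq_nonneg ‖deriv φ r‖]
  simpa using hφr

/-- Uniqueness for the radial eigenfunction ODE `φ'' + ((d−1)/r) φ' = σ φ`:
if `φ` is continuous on `[0,r₀)`, `C²` on `(0,r₀)`, satisfies the ODE on `(0,r₀)`,
and `φ(0) = 0` with `φ'(r) → 0` as `r → 0⁺`, then `φ ≡ 0` on `[0,r₀)`. -/
theorem radial_ode_uniqueness (d : ℕ) (hd : 1 ≤ d) (r₀ : ℝ) (hr₀ : 0 < r₀)
    (σ : ℝ) (φ : ℝ → ℂ)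
    (hcont : ContinuousOn φ (Set.Ico 0 r₀))
    (hC2 : ContDiffOn ℝ 2 φ (Set.Ioo 0 r₀))
    (hode : ∀ r ∈ Set.Ioo (0 : ℝ) r₀,
      deriv (deriv φ) r + (((d : ℂ) - 1) / (r : ℂ)) * deriv φ r = (σ : ℂ) * φ r)
    (h0 : φ 0 = 0)
    (h0' : Filter.Tendsto (deriv φ) (nhdsWithin 0 (Set.Ioi 0)) (nhds 0)) :
    ∀ r ∈ Set.Ico (0 : ℝ) r₀, φ r = 0 := by
  have hφ0 : Tendsto φ (𝓝[>] 0) (𝓝 0) := by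
    have := (hcont 0 ⟨le_rfl, hr₀⟩).tendsto.mono_left (nhdsWithin_mono _ Ioo_subset_Ico_self)
    rw [h0, nhdsWithin_Ioo_eq_nhdsGT hr₀] at this
    exact this
  have hode' : ∀ r ∈ Ioo 0 r₀,
      deriv (deriv φ) r = σ • φ r - (((d : ℝ) - 1) / r) • deriv φ r := fun r hr => by
    simp only [Complex.real_smul]
    push_cast
    linear_combination hode r hr
  have hdamping : ∀ r ∈ Ioo (0 : ℝ) r₀, 0 ≤ ((d : ℝ) - 1) / r := fun r hr =>
    div_nonneg (sub_nonneg.2 (by exact_mod_cast hd)) hr.1.le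
  rintro r ⟨hr0, hr⟩
  obtain rfl | hr0 := hr0.eq_or_lt
  · exact h0
  exact eq_zero_of_deriv_deriv_eq_smul_sub_smul hC2 hdamping hode' hφ0 h0' r ⟨hr0, hr⟩
end

section
/- Let d ≥ 1, r₀ > 0, σ ∈ ℝ, and let Ψ₁, Ψ₂ : ℝ^d → ℂ be smooth on the open ball B(0, r₀), rotationally invariant (Ψᵢ(Rx) = Ψᵢ(x) for every orthogonal transformation R ∈ O(d) and x ∈ B(0, r₀)), and satisfy ΔΨᵢ = σΨᵢ on B(0, r₀) for i = 1, 2. If Ψ₁(0) = Ψ₂(0), then Ψ₁ = Ψ₂ on B(0, r₀). -/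
open MeasureTheory Metric intervalIntegral Set

set_option maxHeartbeats 1000000

/-- The Euclidean Laplacian `Δ Ψ = Σ_j ∂²Ψ/∂y_j²` of a function on `ℝ^d`. -/
noncomputable def lap {d : ℕ} (Ψ : EuclideanSpace ℝ (Fin d) → ℂ)
    (x : EuclideanSpace ℝ (Fin d)) : ℂ :=
  ∑ j : Fin d,
    fderiv ℝ (fun y => fderiv ℝ Ψ y (EuclideanSpace.single j 1)) x (EuclideanSpace.single j 1)



lemma ode_zero (D : ℕ) (r : ℝ) (hr : 0 < r) (c : ℂ)
    (F F' F'' : ℝ → ℂ)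
    (hF : ∀ t ∈ Set.Icc (0:ℝ) r, HasDerivAt F (F' t) t)
    (hF' : ∀ t ∈ Set.Icc (0:ℝ) r, HasDerivAt F' (F'' t) t)
    (hode : ∀ t ∈ Set.Ioc (0:ℝ) r, (t:ℂ) * F'' t + (D:ℂ) * F' t = c * ((t:ℂ) * F t))
    (h0 : F 0 = 0) (h0' : F' 0 = 0) :
    ∀ t ∈ Set.Icc (0:ℝ) r, F t = 0 := by
  have hFc : ContinuousOn F (Icc 0 r) := fun t ht => (hF t ht).continuousAt.continuousWithinAt
  have hF'c : ContinuousOn F' (Icc 0 r) := fun t ht => (hF' t ht).continuousAt.continuousWithinAt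
  obtain ⟨M, hM⟩ := isCompact_Icc.exists_bound_of_continuousOn hFc
  have hM0 : 0 ≤ M := le_trans (norm_nonneg _) (hM 0 ⟨le_refl _, hr.le⟩)
  set w : ℝ → ℂ := fun s => (s ^ D : ℝ) • F' s with hw_def
  have hw : ∀ s ∈ Icc (0:ℝ) r, HasDerivAt w ((s ^ D : ℝ) • F'' s + ((D : ℝ) * s ^ (D - 1)) • F' s) s :=
    fun s hs => (hasDerivAt_pow D s).smul (hF' s hs)
  have hw' : ∀ s ∈ Ioc (0:ℝ) r, HasDerivAt w (c * ((s ^ D : ℝ) • F s)) s := by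
    intro s hs
    have h := hw s ⟨hs.1.le, hs.2⟩
    have hs0 : (s : ℂ) ≠ 0 := by exact_mod_cast hs.1.ne'
    have heq : (s ^ D : ℝ) • F'' s + ((D : ℝ) * s ^ (D - 1)) • F' s = c * ((s ^ D : ℝ) • F s) := by
      have hode' := hode s hs
      cases D with
      | zero =>
        simp only [Nat.cast_zero, zero_mul, add_zero] at hode'
        have h2 : F'' s = c * F s :=
          mul_left_cancel₀ hs0 (by rw [hode']; ring)
        simp only [pow_zero, one_smul, Nat.cast_zero, zero_mul, zero_smul, add_zero, h2]
      | succ k =>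
        simp only [Complex.real_smul, Complex.ofReal_pow, Complex.ofReal_mul,
          Complex.ofReal_natCast, Nat.succ_sub_one]
        have : ((s:ℂ)) ^ (k+1) * F'' s + ((k+1 : ℕ):ℂ) * (s:ℂ) ^ k * F' s
            = (s:ℂ)^k * ((s:ℂ) * F'' s + ((k+1:ℕ):ℂ) * F' s) := by ring
        rw [this, hode']
        ring
    rwa [heq] at h
  -- FTC for w
  have hGc : ContinuousOn (fun s : ℝ => c * ((s ^ D : ℝ) • F s)) (Icc 0 r) :=
    continuousOn_const.mul (((continuous_pow D).continuousOn).smul hFc)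
  have hw0 : w 0 = 0 := by
    cases D with
    | zero => simpa [hw_def] using h0'
    | succ k => simp [hw_def]
  have key : ∀ t ∈ Icc (0:ℝ) r, w t = ∫ s in (0:ℝ)..t, c * ((s ^ D : ℝ) • F s) := by
    intro t ht
    rcases eq_or_lt_of_le ht.1 with h|h
    · simp [← h, hw0]
    · have hsub : Icc (0:ℝ) t ⊆ Icc 0 r := Icc_subset_Icc le_rfl ht.2
      have := integral_eq_sub_of_hasDerivAt_of_le h.le
        ((fun s hs => (hw s (hsub hs)).continuousAt.continuousWithinAt))
        (fun s hs => hw' s ⟨hs.1, hs.2.le.trans ht.2⟩)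
        ((hGc.mono hsub).intervalIntegrable_of_Icc h.le)
      rw [this, hw0, sub_zero]
  -- inductive bound
  have bound : ∀ n : ℕ, ∀ t ∈ Icc (0:ℝ) r, ‖F t‖ ≤ M * (‖c‖ / 2) ^ n / (n.factorial : ℝ) * t ^ (2 * n) := by
    intro n
    induction n with
    | zero => intro t ht; simpa using hM t ht
    | succ n ih =>
      set C : ℝ := M * (‖c‖ / 2) ^ n / (n.factorial : ℝ) with hC_def
      have hC0 : 0 ≤ C := by positivity
      -- bound on w
      have hwb : ∀ t ∈ Icc (0:ℝ) r, ‖w t‖ ≤ ‖c‖ * C * t ^ (D + 2 * n) * t := by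
        intro t ht
        rw [key t ht]
        have hb : ∀ s ∈ Set.uIoc (0:ℝ) t, ‖c * ((s ^ D : ℝ) • F s)‖ ≤ ‖c‖ * C * t ^ (D + 2 * n) := by
          intro s hs
          rw [Set.uIoc_of_le ht.1] at hs
          have hs' : s ∈ Icc (0:ℝ) r := ⟨hs.1.le, hs.2.trans ht.2⟩
          have h1 : ‖c * ((s ^ D : ℝ) • F s)‖ = ‖c‖ * (s ^ D * ‖F s‖) := by
            rw [norm_mul, norm_smul, Real.norm_eq_abs, abs_pow, abs_of_nonneg hs.1.le]
          rw [h1]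
          have h2 : s ^ D * ‖F s‖ ≤ s ^ D * (C * s ^ (2 * n)) :=
            mul_le_mul_of_nonneg_left (ih s hs') (pow_nonneg hs.1.le D)
          have h3 : s ^ D * (C * s ^ (2 * n)) = C * s ^ (D + 2 * n) := by
            rw [pow_add]; ring
          have h4 : C * s ^ (D + 2 * n) ≤ C * t ^ (D + 2 * n) :=
            mul_le_mul_of_nonneg_left (pow_le_pow_left₀ hs.1.le hs.2 _) hC0
          calc ‖c‖ * (s ^ D * ‖F s‖) ≤ ‖c‖ * (C * t ^ (D + 2*n)) := by
                apply mul_le_mul_of_nonneg_left _ (norm_nonneg c)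
                exact (h2.trans_eq h3).trans h4
            _ = ‖c‖ * C * t ^ (D + 2 * n) := by ring
        have := intervalIntegral.norm_integral_le_of_norm_le_const hb
        rwa [sub_zero, abs_of_nonneg ht.1] at this
      -- bound on F'
      have hF'b : ∀ t ∈ Icc (0:ℝ) r, ‖F' t‖ ≤ ‖c‖ * C * t ^ (2 * n + 1) := by
        intro t ht
        rcases eq_or_lt_of_le ht.1 with h|h
        · rw [← h, h0']; simp
        · have hwt := hwb t ht
          have hwn : ‖w t‖ = t ^ D * ‖F' t‖ := by
            rw [hw_def]; simp only
            rw [norm_smul, Real.norm_eq_abs, abs_pow, abs_of_nonneg h.le]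
          rw [hwn] at hwt
          have htD : (0:ℝ) < t ^ D := pow_pos h D
          have : t ^ D * ‖F' t‖ ≤ t ^ D * (‖c‖ * C * t ^ (2 * n + 1)) := by
            calc t ^ D * ‖F' t‖ ≤ ‖c‖ * C * t ^ (D + 2 * n) * t := hwt
              _ = t ^ D * (‖c‖ * C * t ^ (2 * n + 1)) := by rw [pow_add, pow_succ]; ring
          exact le_of_mul_le_mul_left this htD
      -- integrate F'
      intro t ht
      have hsub : Icc (0:ℝ) t ⊆ Icc 0 r := Icc_subset_Icc le_rfl ht.2
      have hFt : F t = ∫ s in (0:ℝ)..t, F' s := by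
        rcases eq_or_lt_of_le ht.1 with h|h
        · simp [← h, h0]
        · have := integral_eq_sub_of_hasDerivAt_of_le h.le (hFc.mono hsub)
            (fun s hs => hF s (hsub (Ioo_subset_Icc_self hs)))
            ((hF'c.mono hsub).intervalIntegrable_of_Icc h.le)
          rw [this, h0, sub_zero]
      rw [hFt]
      have hint1 : IntervalIntegrable (fun s => ‖F' s‖) volume 0 t :=
        ((hF'c.mono hsub).norm).intervalIntegrable_of_Icc ht.1
      have hint2 : IntervalIntegrable (fun s => ‖c‖ * C * s ^ (2 * n + 1)) volume 0 t :=
        (Continuous.intervalIntegrable (by continuity) 0 t)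
      calc ‖∫ s in (0:ℝ)..t, F' s‖ ≤ ∫ s in (0:ℝ)..t, ‖F' s‖ :=
            intervalIntegral.norm_integral_le_integral_norm ht.1
        _ ≤ ∫ s in (0:ℝ)..t, ‖c‖ * C * s ^ (2 * n + 1) := by
            apply intervalIntegral.integral_mono_on ht.1 hint1 hint2
            intro s hs
            exact hF'b s (hsub hs)
        _ = ‖c‖ * C * (t ^ (2 * n + 2) / (2 * n + 2)) := by
            rw [intervalIntegral.integral_const_mul, integral_pow]
            push_cast; ring
        _ ≤ M * (‖c‖ / 2) ^ (n + 1) / ((n+1).factorial : ℝ) * t ^ (2 * (n + 1)) := by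
            apply le_of_eq
            rw [hC_def, Nat.factorial_succ, pow_succ,
              show 2 * (n+1) = 2*n+2 from by ring]
            push_cast
            field_simp
            ring
    -- end induction
  -- conclude by limit
  intro t ht
  have hlim : Filter.Tendsto (fun n : ℕ => M * (‖c‖ / 2) ^ n / (n.factorial : ℝ) * t ^ (2 * n)) Filter.atTop (nhds 0) := by
    have : ∀ n : ℕ, M * (‖c‖ / 2) ^ n / (n.factorial : ℝ) * t ^ (2 * n) = M * ((‖c‖ / 2 * t ^ 2) ^ n / (n.factorial : ℝ)) := by
      intro n
      rw [mul_pow, pow_mul]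
      ring
    simp only [this]
    rw [show (0:ℝ) = M * 0 by ring]
    exact (FloorSemiring.tendsto_pow_div_factorial_atTop (‖c‖/2 * t^2)).const_mul M
  have hle : ‖F t‖ ≤ 0 := ge_of_tendsto' hlim (fun n => bound n t ht)
  simpa using norm_le_zero_iff.mp hle



lemma radial_rep {d : ℕ} {r₀ : ℝ} {Ψ : EuclideanSpace ℝ (Fin d) → ℂ}
    (hrot : ∀ (R : EuclideanSpace ℝ (Fin d) ≃ₗᵢ[ℝ] EuclideanSpace ℝ (Fin d)),
      ∀ x ∈ ball (0 : EuclideanSpace ℝ (Fin d)) r₀, Ψ (R x) = Ψ x)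
    (j0 : Fin d) :
    ∀ x ∈ ball (0 : EuclideanSpace ℝ (Fin d)) r₀,
      Ψ x = Ψ (‖x‖ • EuclideanSpace.single j0 (1:ℝ)) := by
  intro x hx
  set e : EuclideanSpace ℝ (Fin d) := EuclideanSpace.single j0 (1:ℝ) with he_def
  have he : ‖e‖ = 1 := by rw [he_def, EuclideanSpace.norm_single, norm_one]
  have hnorm : ‖‖x‖ • e‖ = ‖x‖ := by
    rw [norm_smul, he, mul_one, norm_norm]
  have hmem : ‖x‖ • e ∈ ball (0 : EuclideanSpace ℝ (Fin d)) r₀ := by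
    rw [mem_ball_zero_iff, hnorm]; exact mem_ball_zero_iff.mp hx
  have hR : (Submodule.reflection (ℝ ∙ ((‖x‖ • e) - x))ᗮ) (‖x‖ • e) = x :=
    Submodule.reflection_sub (by rw [hnorm])
  have := hrot (Submodule.reflection (ℝ ∙ ((‖x‖ • e) - x))ᗮ) (‖x‖ • e) hmem
  rw [hR] at this
  exact this

lemma radial_ode {d : ℕ} (hd : 1 ≤ d) (r₀ : ℝ) (hr₀ : 0 < r₀) (σ : ℝ)
    (Ψ : EuclideanSpace ℝ (Fin d) → ℂ)
    (hsmooth : ContDiffOn ℝ (⊤ : ℕ∞) Ψ (ball (0 : EuclideanSpace ℝ (Fin d)) r₀))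
    (hrot : ∀ (R : EuclideanSpace ℝ (Fin d) ≃ₗᵢ[ℝ] EuclideanSpace ℝ (Fin d)),
      ∀ x ∈ ball (0 : EuclideanSpace ℝ (Fin d)) r₀, Ψ (R x) = Ψ x)
    (heig : ∀ x ∈ ball (0 : EuclideanSpace ℝ (Fin d)) r₀, lap Ψ x = (σ : ℂ) * Ψ x) :
    ∃ f f' f'' : ℝ → ℂ,
      f 0 = Ψ 0 ∧ f' 0 = 0 ∧
      (∀ x ∈ ball (0 : EuclideanSpace ℝ (Fin d)) r₀, Ψ x = f ‖x‖) ∧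
      (∀ t : ℝ, |t| < r₀ → HasDerivAt f (f' t) t) ∧
      (∀ t : ℝ, |t| < r₀ → HasDerivAt f' (f'' t) t) ∧
      (∀ t : ℝ, 0 < t → t < r₀ →
        (t:ℂ) * f'' t + (((d - 1 : ℕ)):ℂ) * f' t = (σ:ℂ) * ((t:ℂ) * f t)) := by
  classical
  set j0 : Fin d := ⟨0, hd⟩ with hj0_def
  set e : EuclideanSpace ℝ (Fin d) := EuclideanSpace.single j0 (1:ℝ) with he_def
  have he : ‖e‖ = 1 := by rw [he_def, EuclideanSpace.norm_single, norm_one]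
  have hmem : ∀ t : ℝ, |t| < r₀ → t • e ∈ ball (0 : EuclideanSpace ℝ (Fin d)) r₀ := by
    intro t ht
    rw [mem_ball_zero_iff, norm_smul, he, mul_one, Real.norm_eq_abs]; exact ht
  have hat : ∀ y ∈ ball (0 : EuclideanSpace ℝ (Fin d)) r₀, ContDiffAt ℝ (⊤ : ℕ∞) Ψ y :=
    fun y hy => hsmooth.contDiffAt (isOpen_ball.mem_nhds hy)
  have hD1 : ∀ y ∈ ball (0 : EuclideanSpace ℝ (Fin d)) r₀, HasFDerivAt Ψ (fderiv ℝ Ψ y) y :=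
    fun y hy => ((hat y hy).differentiableAt (by simp)).hasFDerivAt
  have hD2 : ∀ y ∈ ball (0 : EuclideanSpace ℝ (Fin d)) r₀,
      HasFDerivAt (fderiv ℝ Ψ) (fderiv ℝ (fderiv ℝ Ψ) y) y :=
    fun y hy => (((hat y hy).fderiv_right (m := 1) (by simp [← WithTop.coe_one, ← WithTop.coe_add])).differentiableAt (by simp)).hasFDerivAt
  have hline : ∀ t : ℝ, HasDerivAt (fun s : ℝ => s • e) e t := by
    intro t
    simpa using (hasDerivAt_id t).smul_const e
  have hf' : ∀ t : ℝ, |t| < r₀ → HasDerivAt (fun s : ℝ => Ψ (s • e)) (fderiv ℝ Ψ (t • e) e) t := by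
    intro t ht
    exact (hD1 _ (hmem t ht)).comp_hasDerivAt t (hline t)
  have hf'' : ∀ t : ℝ, |t| < r₀ →
      HasDerivAt (fun s : ℝ => fderiv ℝ Ψ (s • e) e) (fderiv ℝ (fderiv ℝ Ψ) (t • e) e e) t := by
    intro t ht
    have h1 : HasDerivAt (fun s : ℝ => fderiv ℝ Ψ (s • e)) (fderiv ℝ (fderiv ℝ Ψ) (t • e) e) t :=
      (hD2 _ (hmem t ht)).comp_hasDerivAt t (hline t)
    simpa using h1.clm_apply (hasDerivAt_const t e)
  have hrep := radial_rep hrot j0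
  have heven : ∀ t : ℝ, |t| < r₀ → Ψ ((-t) • e) = Ψ (t • e) := by
    intro t ht
    have h1 := hrep ((-t) • e) (hmem (-t) (by rwa [abs_neg]))
    have h2 := hrep (t • e) (hmem t ht)
    rw [norm_smul, he, mul_one, Real.norm_eq_abs, abs_neg] at h1
    rw [norm_smul, he, mul_one, Real.norm_eq_abs] at h2
    rw [h1]; exact h2.symm
  have hf'0 : fderiv ℝ Ψ ((0:ℝ) • e) e = 0 := by
    have hd0 : HasDerivAt (fun s : ℝ => Ψ (s • e)) (fderiv ℝ Ψ ((0:ℝ) • e) e) 0 :=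
      hf' 0 (by simpa using hr₀)
    have hlineneg : HasDerivAt (fun s : ℝ => (-s) • e) (-e) 0 := by
      simpa using ((hasDerivAt_id (0:ℝ)).neg.smul_const e)
    have hFD : HasFDerivAt Ψ (fderiv ℝ Ψ ((0:ℝ) • e)) ((-(0:ℝ)) • e) := by
      rw [neg_zero]; exact hD1 _ (hmem 0 (by simpa using hr₀))
    have hneg : HasDerivAt (fun s : ℝ => Ψ ((-s) • e)) (fderiv ℝ Ψ ((0:ℝ) • e) (-e)) 0 :=
      hFD.comp_hasDerivAt 0 hlineneg
    rw [map_neg] at hneg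
    have hIoo : Set.Ioo (-r₀) r₀ ∈ nhds (0:ℝ) :=
      isOpen_Ioo.mem_nhds (by constructor <;> linarith)
    have heq : (fun s : ℝ => Ψ (s • e)) =ᶠ[nhds (0:ℝ)] (fun s : ℝ => Ψ ((-s) • e)) := by
      filter_upwards [hIoo] with s hs
      exact (heven s (abs_lt.mpr ⟨hs.1, hs.2⟩)).symm
    have hneg' : HasDerivAt (fun s : ℝ => Ψ (s • e)) (-(fderiv ℝ Ψ ((0:ℝ) • e) e)) 0 :=
      hneg.congr_of_eventuallyEq heq
    have h2 := hd0.unique hneg'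
    linear_combination h2 / 2
  refine ⟨fun t => Ψ (t • e), fun t => fderiv ℝ Ψ (t • e) e,
    fun t => fderiv ℝ (fderiv ℝ Ψ) (t • e) e e, by show Ψ ((0:ℝ) • e) = Ψ 0; rw [zero_smul], hf'0, ?_, hf', hf'', ?_⟩
  · intro x hx
    exact hrep x hx
  · intro t ht0 htr
    have habs : |t| < r₀ := by rwa [abs_of_pos ht0]
    have hx : t • e ∈ ball (0 : EuclideanSpace ℝ (Fin d)) r₀ := hmem t habs
    set x : EuclideanSpace ℝ (Fin d) := t • e with hx_def
    set H := fderiv ℝ (fderiv ℝ Ψ) x with hH_def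
    have hterm : ∀ j : Fin d,
        fderiv ℝ (fun y => fderiv ℝ Ψ y (EuclideanSpace.single j 1)) x (EuclideanSpace.single j 1)
          = H (EuclideanSpace.single j 1) (EuclideanSpace.single j 1) := by
      intro j
      have h1 : HasFDerivAt (fun y => fderiv ℝ Ψ y (EuclideanSpace.single j (1:ℝ)))
          ((fderiv ℝ Ψ x).comp (0 : EuclideanSpace ℝ (Fin d) →L[ℝ] EuclideanSpace ℝ (Fin d))
            + H.flip (EuclideanSpace.single j (1:ℝ))) x :=
        (hD2 x hx).clm_apply (hasFDerivAt_const _ x)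
      rw [h1.fderiv]
      simp [ContinuousLinearMap.flip_apply]
    have htan : ∀ j : Fin d, j ≠ j0 →
        (t:ℂ) * H (EuclideanSpace.single j 1) (EuclideanSpace.single j 1) = fderiv ℝ Ψ x e := by
      intro j hj
      set u : EuclideanSpace ℝ (Fin d) := EuclideanSpace.single j (1:ℝ) with hu_def
      have hu : ‖u‖ = 1 := by rw [hu_def, EuclideanSpace.norm_single, norm_one]
      have huv : (inner ℝ e u : ℝ) = 0 := by
        rw [he_def, EuclideanSpace.inner_single_left]
        simp [hu_def, EuclideanSpace.single_apply, Ne.symm hj]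
      set c : ℝ → EuclideanSpace ℝ (Fin d) :=
        fun s => (t * Real.cos s) • e + (t * Real.sin s) • u with hc_def
      set c' : ℝ → EuclideanSpace ℝ (Fin d) :=
        fun s => (t * -Real.sin s) • e + (t * Real.cos s) • u with hc'_def
      have hcnorm : ∀ s, ‖c s‖ = t := by
        intro s
        have h1 : ‖c s‖^2 = t^2 := by
          rw [hc_def]
          simp only
          rw [norm_add_sq_real, norm_smul, norm_smul, he, hu, real_inner_smul_left,
            real_inner_smul_right, huv]
          simp only [Real.norm_eq_abs, mul_one, mul_zero]
          rw [sq_abs, sq_abs]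
          nlinarith [Real.sin_sq_add_cos_sq s]
        rw [← Real.sqrt_sq (norm_nonneg (c s)), h1, Real.sqrt_sq ht0.le]
      have hcmem : ∀ s, c s ∈ ball (0 : EuclideanSpace ℝ (Fin d)) r₀ := by
        intro s; rw [mem_ball_zero_iff, hcnorm]; exact htr
      have hc0 : c 0 = x := by
        rw [hc_def]; simp [hx_def]
      have hgconst : ∀ s, Ψ (c s) = Ψ x := by
        intro s
        have h1 := hrep (c s) (hcmem s)
        have h2 := hrep x hx
        rw [hcnorm] at h1
        rw [h1, h2, hx_def, norm_smul, he, mul_one, Real.norm_eq_abs, abs_of_pos ht0]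
      have hcd : ∀ s, HasDerivAt c (c' s) s := by
        intro s
        rw [hc_def, hc'_def]
        exact (((Real.hasDerivAt_cos s).const_mul t).smul_const e).add
          (((Real.hasDerivAt_sin s).const_mul t).smul_const u)
      have hzero : ∀ s, fderiv ℝ Ψ (c s) (c' s) = 0 := by
        intro s
        have h1 : HasDerivAt (fun s' => Ψ (c s')) (fderiv ℝ Ψ (c s) (c' s)) s :=
          (hD1 _ (hcmem s)).comp_hasDerivAt s (hcd s)
        have h2 : (fun s' => Ψ (c s')) = fun _ => Ψ x := funext hgconst
        rw [h2] at h1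
        exact h1.unique (hasDerivAt_const s _)
      have hc'0 : c' 0 = t • u := by rw [hc'_def]; simp
      have hcd0 : HasDerivAt c (t • u) 0 := by rw [← hc'0]; exact hcd 0
      have hA : HasDerivAt (fun s => fderiv ℝ Ψ (c s)) (H (t • u)) 0 := by
        have h1 := (hD2 (c 0) (hcmem 0)).comp_hasDerivAt 0 hcd0
        rw [hc0] at h1
        exact h1
      have hB : HasDerivAt c' ((-t) • e) 0 := by
        have h1 : HasDerivAt c' ((t * -Real.cos 0) • e + (t * -Real.sin 0) • u) 0 := by
          rw [hc'_def]
          exact ((((Real.hasDerivAt_sin 0).neg).const_mul t).smul_const e).add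
            (((Real.hasDerivAt_cos 0).const_mul t).smul_const u)
        simpa using h1
      have hh : HasDerivAt (fun s => fderiv ℝ Ψ (c s) (c' s))
          (H (t • u) (c' 0) + (fderiv ℝ Ψ (c 0)) ((-t) • e)) 0 := hA.clm_apply hB
      have h2 : (fun s => fderiv ℝ Ψ (c s) (c' s)) = fun _ => (0:ℂ) := funext hzero
      rw [h2] at hh
      have h3 := hh.unique (hasDerivAt_const 0 (0:ℂ))
      rw [hc'0, hc0] at h3
      -- h3 : H (t • u) (t • u) + fderiv ℝ Ψ x ((-t) • e) = 0
      have h4 : (t:ℂ) * ((t:ℂ) * H u u) - (t:ℂ) * fderiv ℝ Ψ x e = 0 := by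
        have e1 : H (t • u) (t • u) = (t:ℂ) * ((t:ℂ) * H u u) := by
          simp only [_root_.map_smul, ContinuousLinearMap.coe_smul', Pi.smul_apply,
            Complex.real_smul]
        have e2 : fderiv ℝ Ψ x ((-t) • e) = -((t:ℂ) * fderiv ℝ Ψ x e) := by
          simp only [_root_.map_smul, Complex.real_smul, Complex.ofReal_neg, neg_mul]
        rw [e1, e2] at h3
        linear_combination h3
      have ht0' : (t:ℂ) ≠ 0 := by exact_mod_cast ht0.ne'
      have h5 : (t:ℂ) * ((t:ℂ) * H u u) = (t:ℂ) * fderiv ℝ Ψ x e := by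
        linear_combination h4
      exact mul_left_cancel₀ ht0' h5
    -- assemble
    have hlap : ∑ j : Fin d, H (EuclideanSpace.single j 1) (EuclideanSpace.single j 1)
        = (σ:ℂ) * Ψ x := by
      rw [← heig x hx]
      unfold lap
      exact (Finset.sum_congr rfl fun j _ => hterm j).symm
    have hsplit : ∑ j : Fin d, H (EuclideanSpace.single j 1) (EuclideanSpace.single j 1)
        = H e e + ∑ j ∈ Finset.univ.erase j0,
            H (EuclideanSpace.single j 1) (EuclideanSpace.single j 1) := by
      rw [he_def]
      exact (Finset.add_sum_erase _ _ (Finset.mem_univ j0)).symm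
    have hmul : (t:ℂ) * ((σ:ℂ) * Ψ x)
        = (t:ℂ) * H e e + ∑ j ∈ Finset.univ.erase j0,
            (t:ℂ) * H (EuclideanSpace.single j 1) (EuclideanSpace.single j 1) := by
      rw [← hlap, hsplit, mul_add, Finset.mul_sum]
    rw [Finset.sum_congr rfl (fun j hj => htan j (Finset.ne_of_mem_erase hj))] at hmul
    rw [Finset.sum_const, Finset.card_erase_of_mem (Finset.mem_univ j0), Finset.card_univ,
      Fintype.card_fin, nsmul_eq_mul] at hmul
    -- hmul : t * (σ * Ψ x) = t * H e e + (d-1) * fderiv Ψ x e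
    linear_combination -hmul

/-- Two smooth rotationally invariant eigenfunctions of the Euclidean Laplacian on
`B(0,r₀)` with the same eigenvalue and the same value at the origin coincide on `B(0,r₀)`. -/
theorem radial_eigenfunction_unique (d : ℕ) (hd : 1 ≤ d) (r₀ : ℝ) (hr₀ : 0 < r₀)
    (σ : ℝ) (Ψ₁ Ψ₂ : EuclideanSpace ℝ (Fin d) → ℂ)
    (h₁smooth : ContDiffOn ℝ (⊤ : ℕ∞) Ψ₁ (ball (0 : EuclideanSpace ℝ (Fin d)) r₀))
    (h₂smooth : ContDiffOn ℝ (⊤ : ℕ∞) Ψ₂ (ball (0 : EuclideanSpace ℝ (Fin d)) r₀))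
    (h₁rot : ∀ (R : EuclideanSpace ℝ (Fin d) ≃ₗᵢ[ℝ] EuclideanSpace ℝ (Fin d)),
      ∀ x ∈ ball (0 : EuclideanSpace ℝ (Fin d)) r₀, Ψ₁ (R x) = Ψ₁ x)
    (h₂rot : ∀ (R : EuclideanSpace ℝ (Fin d) ≃ₗᵢ[ℝ] EuclideanSpace ℝ (Fin d)),
      ∀ x ∈ ball (0 : EuclideanSpace ℝ (Fin d)) r₀, Ψ₂ (R x) = Ψ₂ x)
    (h₁eig : ∀ x ∈ ball (0 : EuclideanSpace ℝ (Fin d)) r₀, lap Ψ₁ x = (σ : ℂ) * Ψ₁ x)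
    (h₂eig : ∀ x ∈ ball (0 : EuclideanSpace ℝ (Fin d)) r₀, lap Ψ₂ x = (σ : ℂ) * Ψ₂ x)
    (h0 : Ψ₁ 0 = Ψ₂ 0) :
    ∀ x ∈ ball (0 : EuclideanSpace ℝ (Fin d)) r₀, Ψ₁ x = Ψ₂ x := by
  obtain ⟨f₁, g₁, k₁, h₁0, h₁'0, h₁rep, h₁d, h₁d2, h₁ode⟩ :=
    radial_ode hd r₀ hr₀ σ Ψ₁ h₁smooth h₁rot h₁eig
  obtain ⟨f₂, g₂, k₂, h₂0, h₂'0, h₂rep, h₂d, h₂d2, h₂ode⟩ :=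
    radial_ode hd r₀ hr₀ σ Ψ₂ h₂smooth h₂rot h₂eig
  intro x hx
  have hxr : ‖x‖ < r₀ := mem_ball_zero_iff.mp hx
  have hx0 : (0:ℝ) ≤ ‖x‖ := norm_nonneg x
  set r : ℝ := (‖x‖ + r₀) / 2 with hr_def
  have hr0 : 0 < r := by rw [hr_def]; linarith
  have hrr : r < r₀ := by rw [hr_def]; linarith
  have hxle : ‖x‖ ≤ r := by rw [hr_def]; linarith
  have hsub : ∀ t ∈ Set.Icc (0:ℝ) r, |t| < r₀ := by
    intro t ht
    rw [abs_of_nonneg ht.1]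
    linarith [ht.2]
  have key := ode_zero (d - 1) r hr0 (σ:ℂ)
    (fun t => f₁ t - f₂ t) (fun t => g₁ t - g₂ t) (fun t => k₁ t - k₂ t)
    (fun t ht => ((h₁d t (hsub t ht)).sub (h₂d t (hsub t ht))))
    (fun t ht => ((h₁d2 t (hsub t ht)).sub (h₂d2 t (hsub t ht))))
    (fun t ht => by
      have e1 := h₁ode t ht.1 (lt_of_le_of_lt ht.2 hrr)
      have e2 := h₂ode t ht.1 (lt_of_le_of_lt ht.2 hrr)
      linear_combination e1 - e2)
    (by rw [h₁0, h₂0, h0, sub_self])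
    (by rw [h₁'0, h₂'0, sub_self])
  have hF := key ‖x‖ ⟨norm_nonneg x, hxle⟩
  rw [h₁rep x hx, h₂rep x hx]
  exact sub_eq_zero.mp hF
end

section
/- Nonexistence of an exact isometry density for hyperbolic 3-space: there do not exist t > 0 and a measurable rotationally invariant function α : B(0, π) → [0, ∞) on the open ball of radius π in ℝ³ such that for almost every ξ ∈ (0, ∞) the integral ∫_{0 < |Y| < π} (sinh(ξ|Y|)/(ξ sin|Y|)) α(Y) dY is finite and equal to e^{t(ξ² + 1)}. -/
/-!
For `0 < r < π` the kernel `sinh (ξ r) / ξ` lies between `r` and `r e^{πξ}`, so for a nonnegative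
`α` and any `ξ₀ > 0` we get `I13 α ξ ≤ e^{πξ} I13 α ξ₀`: the integral grows at most exponentially
in `ξ`, which the Gaussian growth of `e^{t(ξ² + 1)}` rules out.
-/

open MeasureTheory Metric Real

/-- The integral `I(ξ) = ∫_{0<|Y|<π} sinh(ξ|Y|)/(ξ sin|Y|) α(Y) dY` over the punctured
open ball of radius `π` in `ℝ³`. -/
noncomputable def I13 (α : EuclideanSpace ℝ (Fin 3) → ℝ) (ξ : ℝ) : ENNReal :=
  ∫⁻ Y in ball (0 : EuclideanSpace ℝ (Fin 3)) π \ {0},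
    ENNReal.ofReal (Real.sinh (ξ * ‖Y‖) / (ξ * Real.sin ‖Y‖) * α Y)

open Filter Set

lemma sinh_le_mul_exp (x : ℝ) : sinh x ≤ x * exp x := by
  have h2x : 1 - 2 * x ≤ exp (-(2 * x)) := by linarith [add_one_le_exp (-(2 * x))]
  have hsplit : exp (-x) = exp x * exp (-(2 * x)) := by rw [← exp_add]; ring_nf
  rw [sinh_eq, hsplit]
  nlinarith [exp_pos x]

lemma sinh_mul_div_le_exp_mul_sinh_mul_div {ξ ξ₀ r s : ℝ} (hξ : 0 < ξ) (hξ₀ : 0 < ξ₀)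
    (hr : 0 ≤ r) (hrs : r ≤ s) :
    sinh (ξ * r) / ξ ≤ exp (ξ * s) * (sinh (ξ₀ * r) / ξ₀) := by
  have hupper : sinh (ξ * r) / ξ ≤ r * exp (ξ * s) := by
    rw [div_le_iff₀ hξ]
    calc sinh (ξ * r) ≤ ξ * r * exp (ξ * r) := sinh_le_mul_exp _
      _ ≤ ξ * r * exp (ξ * s) := by gcongr
      _ = r * exp (ξ * s) * ξ := by ring
  have hlower : r ≤ sinh (ξ₀ * r) / ξ₀ := by
    rw [le_div_iff₀ hξ₀, mul_comm]
    exact self_le_sinh_iff.mpr (by positivity)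
  calc sinh (ξ * r) / ξ ≤ r * exp (ξ * s) := hupper
    _ ≤ sinh (ξ₀ * r) / ξ₀ * exp (ξ * s) := by gcongr
    _ = exp (ξ * s) * (sinh (ξ₀ * r) / ξ₀) := mul_comm _ _

lemma I13_le_exp_mul_I13 {α : EuclideanSpace ℝ (Fin 3) → ℝ}
    (hα : ∀ Y ∈ ball (0 : EuclideanSpace ℝ (Fin 3)) π, 0 ≤ α Y)
    {ξ ξ₀ : ℝ} (hξ : 0 < ξ) (hξ₀ : 0 < ξ₀) :
    I13 α ξ ≤ ENNReal.ofReal (exp (ξ * π)) * I13 α ξ₀ := by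
  rw [I13, I13, ← lintegral_const_mul' _ _ ENNReal.ofReal_ne_top]
  refine lintegral_mono_ae ?_
  filter_upwards [ae_restrict_mem (measurableSet_ball.diff (measurableSet_singleton 0))]
    with Y ⟨hYball, hYzero⟩
  have hr : 0 < ‖Y‖ := norm_pos_iff.mpr hYzero
  have hrπ : ‖Y‖ < π := mem_ball_zero_iff.mp hYball
  have hsin : 0 < sin ‖Y‖ := sin_pos_of_pos_of_lt_pi hr hrπ
  rw [← ENNReal.ofReal_mul (exp_nonneg _)]
  refine ENNReal.ofReal_le_ofReal ?_
  calc sinh (ξ * ‖Y‖) / (ξ * sin ‖Y‖) * α Y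
      = sinh (ξ * ‖Y‖) / ξ / sin ‖Y‖ * α Y := by rw [div_div]
    _ ≤ exp (ξ * π) * (sinh (ξ₀ * ‖Y‖) / ξ₀) / sin ‖Y‖ * α Y := by
      gcongr
      · exact hα Y hYball
      · exact sinh_mul_div_le_exp_mul_sinh_mul_div hξ hξ₀ hr.le hrπ.le
    _ = exp (ξ * π) * (sinh (ξ₀ * ‖Y‖) / (ξ₀ * sin ‖Y‖) * α Y) := by
      rw [← div_div]; ring

lemma eventually_mul_add_lt_mul_sq {t : ℝ} (ht : 0 < t) (a b : ℝ) :
    ∀ᶠ ξ in atTop, a * ξ + b < t * ξ ^ 2 := by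
  have hlin : Tendsto (fun ξ : ℝ ↦ t * ξ - a) atTop atTop :=
    tendsto_atTop_add_const_right _ _ (tendsto_id.const_mul_atTop ht)
  have hquad : Tendsto (fun ξ : ℝ ↦ ξ * (t * ξ - a) - b) atTop atTop :=
    tendsto_atTop_add_const_right _ _ (tendsto_id.atTop_mul_atTop₀ hlin)
  filter_upwards [hquad.eventually_gt_atTop 0] with ξ hξ
  linarith

lemma frequently_atTop_of_ae_restrict_Ioi {P : ℝ → Prop} {a : ℝ}
    (h : ∀ᵐ x ∂(volume.restrict (Ioi a)), P x) : ∃ᶠ x in atTop, P x := by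
  refine frequently_atTop.mpr fun b ↦ ?_
  have hsub : ∀ᵐ x ∂(volume.restrict (Ioi (max a b))), P x :=
    ae_restrict_of_ae_restrict_of_subset (Ioi_subset_Ioi (le_max_left a b)) h
  have : (ae (volume.restrict (Ioi (max a b)))).NeBot := ae_neBot.mpr (by simp)
  obtain ⟨x, hPx, hx⟩ := (hsub.and (ae_restrict_mem measurableSet_Ioi)).exists
  exact ⟨x, (le_max_right a b).trans (le_of_lt hx), hPx⟩

/-- Nonexistence of an exact isometry density for hyperbolic 3-space: there are no `t > 0`
and measurable rotationally invariant `α : B(0,π) → [0,∞)` such that for a.e. `ξ > 0`,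
`∫_{0<|Y|<π} sinh(ξ|Y|)/(ξ sin|Y|) α(Y) dY = e^{t(ξ²+1)}` (in particular finite). -/
theorem no_exact_isometry_density :
    ¬ ∃ t : ℝ, 0 < t ∧ ∃ α : EuclideanSpace ℝ (Fin 3) → ℝ,
      AEMeasurable α
        ((volume : Measure (EuclideanSpace ℝ (Fin 3))).restrict
          (ball (0 : EuclideanSpace ℝ (Fin 3)) π)) ∧
      (∀ Y ∈ ball (0 : EuclideanSpace ℝ (Fin 3)) π, 0 ≤ α Y) ∧
      (∀ (R : EuclideanSpace ℝ (Fin 3) ≃ₗᵢ[ℝ] EuclideanSpace ℝ (Fin 3)),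
        ∀ Y ∈ ball (0 : EuclideanSpace ℝ (Fin 3)) π, α (R Y) = α Y) ∧
      (∀ᵐ ξ ∂((volume : Measure ℝ).restrict (Set.Ioi (0 : ℝ))),
        I13 α ξ = ENNReal.ofReal (Real.exp (t * (ξ ^ 2 + 1)))) := by
  rintro ⟨t, ht, α, -, hα, -, hI⟩
  obtain ⟨ξ₀, hξ₀, hξ₀pos⟩ :=
    ((frequently_atTop_of_ae_restrict_Ioi hI).and_eventually (eventually_gt_atTop 0)).exists
  obtain ⟨ξ, ⟨hξ, hξpos⟩, hlarge⟩ :=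
    ((frequently_atTop_of_ae_restrict_Ioi hI).and_eventually (eventually_gt_atTop 0)
      |>.and_eventually (eventually_mul_add_lt_mul_sq ht π (t * ξ₀ ^ 2))).exists
  have hle := I13_le_exp_mul_I13 hα hξpos hξ₀pos
  rw [hξ, hξ₀, ← ENNReal.ofReal_mul (exp_nonneg _),
    ENNReal.ofReal_le_ofReal_iff (by positivity), ← exp_add, exp_le_exp] at hle
  linarith
end
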